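/- Let b : [0,∞) → (0,∞) be continuous, s ≥ 0 and f ∈ 𝒮(ℝ). For t ≥ s and x ∈ ℝ define u(x,t) = (2π)^{-1/2} ∫_ℝ e^{iξx} exp( −∫_s^t Log(1 − i b(τ) ξ) dτ ) f̂(ξ) dξ. Then u(x,s) = f(x) for all x, and for every x and t ≥ s the function t ↦ u(x,t) is differentiable with ∂_t u(x,t) = (2π)^{-1/2} ∫_ℝ e^{iξx} ( −Log(1 − i b(t) ξ) ) exp( −∫_s^t Log(1 − i b(τ) ξ) dτ ) f̂(ξ) dξ; that is, u solves ∂_t u = −ln(1 − b(t) ∂_x) u, u(·,s) = f, where −ln(1 − b(t)∂_x) is the Fourier-multiplier operator with symbol −Log(1 − i b(t) ξ). -/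

import Mathlib

open MeasureTheory Complex Real Filter

/-- Fourier transform with the `(2π)^{-1/2}` normalization. -/
noncomputable def fhat (f : ℝ → ℂ) (p : ℝ) : ℂ :=
  (Real.sqrt (2 * Real.pi))⁻¹ * ∫ x : ℝ, Complex.exp (-(Complex.I * p * x)) * f x

/-!
On the Fourier side `u(·, t)` is `f̂` multiplied by `P(t, ξ) = exp (-∫ₛᵗ Log (1 - i b(τ) ξ) dτ)`.
At `t = s` the multiplier is `1`, so the initial condition is Fourier inversion. For the time
derivative we differentiate under the integral sign: `Re Log (1 - i c ξ) = log |1 - i c ξ| ≥ 0`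
and `|Log (1 - i c ξ)| ≤ π + |c| |ξ|`, so with `B` a bound for `|b|` near `[s, t]`, for `t'` near
`t` we get `|P(t', ξ)| ≤ 1 + B |ξ|` (even for `t' < s`, since then `s - t' < 1`) and
`|∂ₜ P(t', ξ)| ≤ (π + B |ξ|) (1 + B |ξ|)`. The Schwartz function `f̂` dominates these polynomials.
-/

open scoped FourierTransform SchwartzMap Topology

/-- `-logSymbol (b t)` is the symbol of the generator `-log (1 - b(t) ∂ₓ)`. -/
noncomputable def logSymbol (c ξ : ℝ) : ℂ := log (1 - I * c * ξ)

lemma re_one_sub_I_mul (c ξ : ℝ) : (1 - I * c * ξ).re = 1 := by simp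

lemma one_sub_I_mul_mem_slitPlane (c ξ : ℝ) : 1 - I * c * ξ ∈ slitPlane :=
  Or.inl (by rw [re_one_sub_I_mul]; exact one_pos)

lemma one_le_norm_one_sub_I_mul (c ξ : ℝ) : 1 ≤ ‖1 - I * c * ξ‖ := by
  simpa [re_one_sub_I_mul] using abs_re_le_norm (1 - I * c * ξ)

lemma norm_one_sub_I_mul_le {B c : ℝ} (hc : |c| ≤ B) (ξ : ℝ) :
    ‖1 - I * c * ξ‖ ≤ 1 + B * |ξ| :=
  calc ‖1 - I * c * ξ‖ ≤ ‖(1 : ℂ)‖ + ‖I * c * ξ‖ := norm_sub_le _ _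
    _ = 1 + |c| * |ξ| := by simp
    _ ≤ 1 + B * |ξ| := by gcongr

lemma Continuous.logSymbol {α : Type*} [TopologicalSpace α] {c ξ : α → ℝ} (hc : Continuous c)
    (hξ : Continuous ξ) : Continuous fun x => logSymbol (c x) (ξ x) :=
  Continuous.clog (by fun_prop) fun x => one_sub_I_mul_mem_slitPlane (c x) (ξ x)

lemma logSymbol_re_nonneg (c ξ : ℝ) : 0 ≤ (logSymbol c ξ).re := by
  rw [logSymbol, log_re]
  exact Real.log_nonneg (one_le_norm_one_sub_I_mul c ξ)

lemma logSymbol_re_le {B c : ℝ} (hc : |c| ≤ B) (ξ : ℝ) :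
    (logSymbol c ξ).re ≤ Real.log (1 + B * |ξ|) := by
  rw [logSymbol, log_re]
  exact Real.log_le_log (one_pos.trans_le (one_le_norm_one_sub_I_mul c ξ))
    (norm_one_sub_I_mul_le hc ξ)

lemma norm_logSymbol_le {B c : ℝ} (hc : |c| ≤ B) (ξ : ℝ) :
    ‖logSymbol c ξ‖ ≤ π + B * |ξ| := by
  have hB : 0 ≤ B * |ξ| := mul_nonneg ((abs_nonneg c).trans hc) (abs_nonneg ξ)
  calc ‖logSymbol c ξ‖ ≤ |(logSymbol c ξ).re| + |(logSymbol c ξ).im| :=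
        norm_le_abs_re_add_abs_im _
    _ ≤ B * |ξ| + π := by
      gcongr
      · rw [abs_of_nonneg (logSymbol_re_nonneg c ξ)]
        linarith [logSymbol_re_le hc ξ,
          Real.log_le_sub_one_of_pos (by linarith : 0 < 1 + B * |ξ|)]
      · rw [logSymbol, log_im]
        exact abs_arg_le_pi _
    _ = π + B * |ξ| := add_comm _ _

lemma intervalIntegral_le_of_sub_le_one {g : ℝ → ℝ} {a s M : ℝ}
    (hg : IntervalIntegrable g volume a s) (hg0 : ∀ τ, 0 ≤ g τ)
    (hM : ∀ τ ∈ Set.uIcc a s, g τ ≤ M) (ha : s - 1 ≤ a) :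
    ∫ τ in a..s, g τ ≤ M := by
  rcases le_or_gt a s with has | hsa
  · have hM0 : 0 ≤ M := (hg0 s).trans (hM s Set.right_mem_uIcc)
    calc ∫ τ in a..s, g τ ≤ ∫ _ in a..s, M :=
          intervalIntegral.integral_mono_on has hg intervalIntegrable_const
            fun τ hτ => hM τ (Set.Icc_subset_uIcc hτ)
      _ = (s - a) * M := by simp
      _ ≤ M := mul_le_of_le_one_left hM0 (by linarith)
  · rw [intervalIntegral.integral_symm]
    have := intervalIntegral.integral_nonneg (μ := volume) hsa.le fun τ _ => hg0 τ
    linarith [hg0 s, hM s Set.right_mem_uIcc]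

/-- The Fourier multiplier of the evolution from time `s` to time `t`. -/
noncomputable def propagator (b : ℝ → ℝ) (s t ξ : ℝ) : ℂ :=
  exp (-∫ τ in s..t, logSymbol (b τ) ξ)

section Propagator

variable {b : ℝ → ℝ}

lemma continuous_propagator (hb : Continuous b) (s t : ℝ) : Continuous (propagator b s t) := by
  have : Continuous fun p : ℝ × ℝ => logSymbol (b p.2) p.1 :=
    (hb.comp continuous_snd).logSymbol continuous_fst
  exact (intervalIntegral.continuous_parametric_intervalIntegral_of_continuous' this s t).neg.cexp

lemma hasDerivAt_propagator (hb : Continuous b) (s t ξ : ℝ) :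
    HasDerivAt (fun t => propagator b s t ξ) (-logSymbol (b t) ξ * propagator b s t ξ) t := by
  simpa [propagator, mul_comm] using
    ((hb.logSymbol continuous_const).integral_hasStrictDerivAt s t).hasDerivAt.neg.cexp

lemma norm_propagator_le (hb : Continuous b) {s t B : ℝ} (ht : s - 1 ≤ t)
    (hB : ∀ τ ∈ Set.uIcc t s, |b τ| ≤ B) (ξ : ℝ) : ‖propagator b s t ξ‖ ≤ 1 + B * |ξ| := by
  have hL : Continuous fun τ => logSymbol (b τ) ξ := hb.logSymbol continuous_const
  have hB0 : 0 ≤ B := (abs_nonneg _).trans (hB s Set.right_mem_uIcc)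
  have hre : (-∫ τ in s..t, logSymbol (b τ) ξ).re = ∫ τ in t..s, (logSymbol (b τ) ξ).re := by
    rw [← intervalIntegral.integral_symm, ← reCLM_apply,
      ← reCLM.intervalIntegral_comp_comm (hL.intervalIntegrable t s)]
    rfl
  rw [propagator, norm_exp, hre, ← Real.exp_log (by positivity : 0 < 1 + B * |ξ|)]
  gcongr
  exact intervalIntegral_le_of_sub_le_one ((continuous_re.comp hL).intervalIntegrable t s)
    (fun τ => logSymbol_re_nonneg _ ξ) (fun τ hτ => logSymbol_re_le (hB τ hτ) ξ) ht

end Propagator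

lemma fhat_eq_fourier (f : ℝ → ℂ) (ξ : ℝ) :
    fhat f ξ = (√(2 * π))⁻¹ * 𝓕 f (ξ / (2 * π)) := by
  rw [fhat, Real.fourier_real_eq_integral_exp_smul]
  congr 2 with x
  rw [smul_eq_mul]
  congr 2
  push_cast
  field_simp

lemma exists_schwartzMap_eq_fhat (f : 𝓢(ℝ, ℂ)) : ∃ g : 𝓢(ℝ, ℂ), ⇑g = fhat f := by
  let e : ℝ ≃L[ℝ] ℝ :=
    ContinuousLinearEquiv.unitsEquivAut ℝ (Units.mk0 (2 * π)⁻¹ (by positivity))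
  refine ⟨((√(2 * π))⁻¹ : ℂ) • SchwartzMap.compCLMOfContinuousLinearEquiv ℂ e (𝓕 f), ?_⟩
  ext ξ
  simp [e, fhat_eq_fourier, div_eq_mul_inv, SchwartzMap.fourier_coe]

lemma fhat_inversion (f : 𝓢(ℝ, ℂ)) (x : ℝ) :
    (√(2 * π))⁻¹ * ∫ ξ : ℝ, exp (I * ξ * x) * fhat f ξ = f x := by
  have h2π : (0 : ℝ) < 2 * π := by positivity
  set φ : ℝ → ℂ := fun η => (√(2 * π))⁻¹ * (exp (I * (2 * π * η) * x) * 𝓕 (f : ℝ → ℂ) η) with hφ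
  have hchange : ∫ ξ : ℝ, exp (I * ξ * x) * fhat f ξ = ∫ ξ : ℝ, φ (ξ / (2 * π)) := by
    congr 1 with ξ
    rw [fhat_eq_fourier, hφ]
    push_cast
    field_simp
  have hinv : ∫ η : ℝ, exp (I * (2 * π * η) * x) * 𝓕 (f : ℝ → ℂ) η = 𝓕⁻ (𝓕 ⇑f) x := by
    rw [Real.fourierInv_eq']
    congr 1 with η
    simp only [smul_eq_mul, RCLike.inner_apply, conj_trivial]
    push_cast
    ring_nf
  rw [hchange, Measure.integral_comp_div φ, integral_const_mul, hinv,
    f.continuous.fourierInv_fourier_eq f.integrable (𝓕 f).integrable, abs_of_pos h2π]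
  have hsq : (√(2 * π) : ℂ) * √(2 * π) = 2 * π := by
    exact_mod_cast Real.mul_self_sqrt h2π.le
  have hne : (√(2 * π) : ℂ) ≠ 0 := by exact_mod_cast (Real.sqrt_pos.2 h2π).ne'
  rw [Complex.real_smul]
  push_cast
  rw [← hsq]
  field_simp

section Schwartz

variable {D V : Type*} [NormedAddCommGroup D] [NormedSpace ℝ D] [MeasurableSpace D]
  [BorelSpace D] [SecondCountableTopology D] [NormedAddCommGroup V] [NormedSpace ℝ V]
  {μ : Measure D} [μ.HasTemperateGrowth]

lemma SchwartzMap.integrable_one_add_norm_pow_mul (g : 𝓢(D, V)) (k : ℕ) :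
    Integrable (fun x => (1 + ‖x‖) ^ k * ‖g x‖) μ := by
  refine (((g.integrable_pow_mul μ 0).add (g.integrable_pow_mul μ k)).const_mul
    (2 ^ (k - 1))).mono'
    (((continuous_const.add continuous_norm).pow k).mul g.continuous.norm).aestronglyMeasurable
    (ae_of_all _ fun x => ?_)
  rw [Pi.add_apply, norm_of_nonneg (by positivity), ← add_mul, ← mul_assoc]
  gcongr
  simpa using add_pow_le zero_le_one (norm_nonneg x) k

theorem hasDerivAt_integral_mul_schwartzMap {m m' : ℝ → D → ℂ} {t C : ℝ} {k : ℕ} {U : Set ℝ}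
    (hU : U ∈ 𝓝 t) (g : 𝓢(D, ℂ)) (hm : ∀ t', Continuous (m t')) (hm' : Continuous (m' t))
    (hm_le : ∀ ξ, ‖m t ξ‖ ≤ C * (1 + ‖ξ‖) ^ k)
    (hm'_le : ∀ t' ∈ U, ∀ ξ, ‖m' t' ξ‖ ≤ C * (1 + ‖ξ‖) ^ k)
    (hderiv : ∀ t' ∈ U, ∀ ξ, HasDerivAt (m · ξ) (m' t' ξ) t') :
    HasDerivAt (fun t => ∫ ξ, m t ξ * g ξ ∂μ) (∫ ξ, m' t ξ * g ξ ∂μ) t := by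
  have hbound : Integrable (fun ξ => C * ((1 + ‖ξ‖) ^ k * ‖g ξ‖)) μ :=
    (g.integrable_one_add_norm_pow_mul k).const_mul C
  have hle {n : D → ℂ} (hn : ∀ ξ, ‖n ξ‖ ≤ C * (1 + ‖ξ‖) ^ k) (ξ : D) :
      ‖n ξ * g ξ‖ ≤ C * ((1 + ‖ξ‖) ^ k * ‖g ξ‖) := by
    rw [norm_mul, ← mul_assoc]
    exact mul_le_mul_of_nonneg_right (hn ξ) (norm_nonneg _)
  refine (hasDerivAt_integral_of_dominated_loc_of_deriv_le hU
    (Eventually.of_forall fun t' => ((hm t').mul g.continuous).aestronglyMeasurable)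
    (hbound.mono' ((hm t).mul g.continuous).aestronglyMeasurable (ae_of_all _ (hle hm_le)))
    (hm'.mul g.continuous).aestronglyMeasurable
    (ae_of_all _ fun ξ t' ht' => hle (hm'_le t' ht') ξ) hbound
    (ae_of_all _ fun ξ t' ht' => (hderiv t' ht' ξ).mul_const (g ξ))).2

end Schwartz

lemma exists_bound_propagator_logSymbol {b : ℝ → ℝ} (hb : Continuous b) {s t : ℝ} (hst : s ≤ t) :
    ∃ B, 0 ≤ B ∧ ∀ t' ∈ Metric.ball t 1, ∀ ξ : ℝ,
      ‖propagator b s t' ξ‖ ≤ (1 + B) * (1 + |ξ|) ∧ ‖logSymbol (b t') ξ‖ ≤ (π + B) * (1 + |ξ|) := by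
  obtain ⟨B, hB⟩ : ∃ B, ∀ τ ∈ Set.Icc (s - 1) (t + 1), |b τ| ≤ B :=
    isCompact_Icc.exists_bound_of_continuousOn hb.continuousOn
  have hB0 : 0 ≤ B := (abs_nonneg _).trans (hB s ⟨by linarith, by linarith⟩)
  refine ⟨B, hB0, fun t' ht' ξ => ?_⟩
  rw [Metric.mem_ball, Real.dist_eq, abs_lt] at ht'
  have hB' : ∀ τ ∈ Set.uIcc t' s, |b τ| ≤ B := fun τ hτ => hB τ <| by
    rcases Set.mem_uIcc.1 hτ with h | h <;> exact ⟨by linarith, by linarith⟩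
  constructor
  · nlinarith [norm_propagator_le hb (by linarith) hB' ξ, abs_nonneg ξ]
  · nlinarith [norm_logSymbol_le (hB' t' Set.left_mem_uIcc) ξ, abs_nonneg ξ, pi_pos]

theorem hasDerivAt_integral_propagator {b : ℝ → ℝ} (hb : Continuous b) {s t : ℝ} (hst : s ≤ t)
    (g : 𝓢(ℝ, ℂ)) (x : ℝ) :
    HasDerivAt (fun t => ∫ ξ : ℝ, exp (I * ξ * x) * (propagator b s t ξ * g ξ))
      (∫ ξ : ℝ, exp (I * ξ * x) * (-logSymbol (b t) ξ * (propagator b s t ξ * g ξ))) t := by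
  obtain ⟨B, hB0, hbound⟩ := exists_bound_propagator_logSymbol hb hst
  have hexp : ∀ ξ : ℝ, ‖exp (I * ξ * x)‖ = 1 := fun ξ => by
    rw [norm_exp]; simp
  have key := hasDerivAt_integral_mul_schwartzMap (μ := volume) (Metric.ball_mem_nhds t one_pos) g
    (m := fun t' (ξ : ℝ) => exp (I * ξ * x) * propagator b s t' ξ)
    (m' := fun t' (ξ : ℝ) => exp (I * ξ * x) * (-logSymbol (b t') ξ * propagator b s t' ξ))
    (C := (π + B) * (1 + B)) (k := 2)
    (fun t' => by have := continuous_propagator hb s t'; fun_prop)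
    (by
      have := continuous_propagator hb s t
      have : Continuous fun ξ => logSymbol (b t) ξ := continuous_const.logSymbol continuous_id
      fun_prop)
    (fun ξ => by
      rw [norm_mul, hexp, one_mul, Real.norm_eq_abs]
      have h1 : 1 ≤ (π + B) * (1 + |ξ|) := by nlinarith [pi_gt_three, abs_nonneg ξ]
      calc _ ≤ (1 + B) * (1 + |ξ|) := (hbound t (Metric.mem_ball_self one_pos) ξ).1
        _ ≤ (π + B) * (1 + |ξ|) * ((1 + B) * (1 + |ξ|)) :=
          le_mul_of_one_le_left (by positivity) h1
        _ = _ := by ring)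
    (fun t' ht' ξ => by
      rw [norm_mul, norm_mul, norm_neg, hexp, one_mul, Real.norm_eq_abs]
      calc _ ≤ (π + B) * (1 + |ξ|) * ((1 + B) * (1 + |ξ|)) := by
            gcongr
            exacts [(hbound t' ht' ξ).2, (hbound t' ht' ξ).1]
        _ = _ := by ring)
    (fun t' _ ξ => (hasDerivAt_propagator hb s t' ξ).const_mul _)
  simpa only [mul_assoc] using key

theorem stmt13_general
    (b : ℝ → ℝ) (hbc : Continuous b)
    (s : ℝ) (f : SchwartzMap ℝ ℂ)
    (u : ℝ → ℝ → ℂ)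
    (hu : ∀ x t : ℝ, u x t = (Real.sqrt (2 * Real.pi))⁻¹ *
      ∫ ξ : ℝ, Complex.exp (Complex.I * ξ * x) *
        (Complex.exp (-(∫ τ in s..t,
            Complex.log (1 - Complex.I * (b τ : ℂ) * ξ))) * fhat (⇑f) ξ)) :
    (∀ x : ℝ, u x s = f x) ∧
    (∀ x t : ℝ, s ≤ t →
      HasDerivAt (fun t' : ℝ => u x t')
        ((Real.sqrt (2 * Real.pi))⁻¹ *
          ∫ ξ : ℝ, Complex.exp (Complex.I * ξ * x) *
            ((-Complex.log (1 - Complex.I * (b t : ℂ) * ξ)) *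
              (Complex.exp (-(∫ τ in s..t,
                  Complex.log (1 - Complex.I * (b τ : ℂ) * ξ))) * fhat (⇑f) ξ)))
        t) := by
  obtain ⟨g, hg⟩ := exists_schwartzMap_eq_fhat f
  refine ⟨fun x => ?_, fun x t hst => ?_⟩
  · simpa only [hu, intervalIntegral.integral_same, neg_zero, Complex.exp_zero, one_mul] using
      fhat_inversion f x
  · simp only [hu, ← hg]
    exact (hasDerivAt_integral_propagator hbc hst g x).const_mul _

theorem stmt13
    (b : ℝ → ℝ) (hbc : Continuous b) (hbpos : ∀ t : ℝ, 0 ≤ t → 0 < b t)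
    (s : ℝ) (hs : 0 ≤ s) (f : SchwartzMap ℝ ℂ)
    (u : ℝ → ℝ → ℂ)
    (hu : ∀ x t : ℝ, u x t = (Real.sqrt (2 * Real.pi))⁻¹ *
      ∫ ξ : ℝ, Complex.exp (Complex.I * ξ * x) *
        (Complex.exp (-(∫ τ in s..t,
            Complex.log (1 - Complex.I * (b τ : ℂ) * ξ))) * fhat (⇑f) ξ)) :
    (∀ x : ℝ, u x s = f x) ∧
    (∀ x t : ℝ, s ≤ t →
      HasDerivAt (fun t' : ℝ => u x t')
        ((Real.sqrt (2 * Real.pi))⁻¹ *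
          ∫ ξ : ℝ, Complex.exp (Complex.I * ξ * x) *
            ((-Complex.log (1 - Complex.I * (b t : ℂ) * ξ)) *
              (Complex.exp (-(∫ τ in s..t,
                  Complex.log (1 - Complex.I * (b τ : ℂ) * ξ))) * fhat (⇑f) ξ)))
        t) :=
  stmt13_general b hbc s f u hu
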